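/- arXiv:0903.1526 — 2 statements merged into one kernel-verified Lean document; each statement's English description precedes it below -/
import Mathlib

section
/- Let W be a subset of a metric space (X,d) and suppose that the density den(W) is a cardinal of uncountable cofinality (i.e., cf(den(W)) > ℵ₀). Then there exists ε₀ > 0 such that for all ε ∈ (0, ε₀) the equalities N̂^X_ε(W) = N̂_ε(W) = M̂_ε(W) = M*_ε(W) = den(W) hold. -/
/-!
For every `ε > 0` one has `N̂ˣ_ε(W) ≤ N̂_ε(W) ≤ M̂_ε(W) ≤ M*_ε(W) ≤ den W`: a maximal
`ε`-distinguishable subset of `W` is an `ε`-net, and an `ε`-distinguishable set injects into any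
dense subset. For the reverse inequality, if `N̂ˣ_ε(W) < den W` for all `ε > 0`, then moving nets
at scales `1 / (n + 1)` into `W` and taking their union gives a dense subset of `W` which, as a
countable union of sets smaller than `den W`, is still smaller than `den W` when `den W` has
uncountable cofinality. Since `N̂ˣ_ε(W)` grows as `ε` decreases, the chain collapses for all
small `ε`.
-/

open Cardinal Set

universe u

/-- `C` is an `ε`-net for `W` (w.r.t. the distance function `d`): every point of `W`
is within distance `ε` of some point of `C`. -/
def IsNet {α : Type u} (d : α → α → ℝ) (ε : ℝ) (W C : Set α) : Prop :=
  ∀ w ∈ W, ∃ c ∈ C, d w c ≤ ε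

/-- `A` is `ε`-distinguishable: distinct points of `A` are at distance `> ε`. -/
def IsDistinguishable {α : Type u} (d : α → α → ℝ) (ε : ℝ) (A : Set α) : Prop :=
  ∀ x ∈ A, ∀ y ∈ A, x ≠ y → ε < d x y

/-- `N̂ᴬ_ε(W)`: the smallest cardinality of a set `C ⊆ A` which is an `ε`-net for `W`. -/
noncomputable def coveringNumberIn {α : Type u} (d : α → α → ℝ) (ε : ℝ) (A W : Set α) :
    Cardinal.{u} :=
  sInf {κ | ∃ C : Set α, C ⊆ A ∧ IsNet d ε W C ∧ #C = κ}

/-- `M*_ε(W)`: the smallest cardinal `≥ card A` for every `ε`-distinguishable `A ⊆ W`. -/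
noncomputable def packingNumberSup {α : Type u} (d : α → α → ℝ) (ε : ℝ) (W : Set α) :
    Cardinal.{u} :=
  sSup {κ | ∃ A : Set α, A ⊆ W ∧ IsDistinguishable d ε A ∧ #A = κ}

/-- `M̂_ε(W)`: the smallest cardinality of a maximal `ε`-distinguishable subset of `W`. -/
noncomputable def maximalPackingInf {α : Type u} (d : α → α → ℝ) (ε : ℝ) (W : Set α) :
    Cardinal.{u} :=
  sInf {κ | ∃ A : Set α, A ⊆ W ∧ IsDistinguishable d ε A ∧
    (∀ B : Set α, B ⊆ W → IsDistinguishable d ε B → A ⊆ B → A = B) ∧ #A = κ}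

/-- `den(W)`: the smallest cardinality of a dense subset of the metric subspace `W`. -/
noncomputable def metricDensity {X : Type u} [MetricSpace X] (W : Set X) : Cardinal.{u} :=
  sInf {κ | ∃ D : Set X, D ⊆ W ∧ (∀ w ∈ W, ∀ δ : ℝ, 0 < δ → ∃ y ∈ D, dist w y < δ) ∧ #D = κ}

theorem Cardinal.mk_iUnion_nat_lt_of_aleph0_lt_cof {α : Type u} {c : Cardinal.{u}}
    (hc : ℵ₀ < c.ord.cof) {f : ℕ → Set α} (hf : ∀ n, #(f n) < c) : #(⋃ n, f n) < c := by
  have hℵc : ℵ₀ < c := hc.trans_le (Ordinal.cof_ord_le c)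
  rw [← Equiv.ulift.surjective.iUnion_comp]
  refine (mk_iUnion_le _).trans_lt ?_
  rw [mk_eq_aleph0]
  exact mul_lt_of_lt hℵc.le hℵc (iSup_lt_of_lt_cof_ord (by rwa [mk_eq_aleph0]) fun n => hf _)

section Distance

variable {α : Type u} {d : α → α → ℝ} {ε ε' : ℝ} {A W C : Set α}

theorem IsNet.mono (hεε' : ε ≤ ε') (hC : IsNet d ε W C) : IsNet d ε' W C :=
  fun w hw => (hC w hw).imp fun _ ⟨hc, hwc⟩ => ⟨hc, hwc.trans hεε'⟩

theorem coveringNumberIn_le_card (hCA : C ⊆ A) (hC : IsNet d ε W C) :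
    coveringNumberIn d ε A W ≤ #C :=
  csInf_le' ⟨C, hCA, hC, rfl⟩

theorem exists_isNet_card_eq_coveringNumberIn (h : ∃ C ⊆ A, IsNet d ε W C) :
    ∃ C ⊆ A, IsNet d ε W C ∧ #C = coveringNumberIn d ε A W :=
  let ⟨C, hCA, hC⟩ := h
  csInf_mem (s := {κ | ∃ C ⊆ A, IsNet d ε W C ∧ #C = κ}) ⟨#C, C, hCA, hC, rfl⟩

theorem coveringNumberIn_mono {B : Set α} (hAB : A ⊆ B) (hεε' : ε ≤ ε')
    (h : ∃ C ⊆ A, IsNet d ε W C) : coveringNumberIn d ε' B W ≤ coveringNumberIn d ε A W := by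
  obtain ⟨C, hCA, hC, hCcard⟩ := exists_isNet_card_eq_coveringNumberIn h
  exact hCcard ▸ coveringNumberIn_le_card (hCA.trans hAB) (hC.mono hεε')

variable (d ε W) in
theorem exists_maximal_isDistinguishable :
    ∃ A ⊆ W, IsDistinguishable d ε A ∧
      ∀ B ⊆ W, IsDistinguishable d ε B → A ⊆ B → A = B := by
  obtain ⟨A, hA⟩ := zorn_subset {A : Set α | A ⊆ W ∧ IsDistinguishable d ε A} fun c hcS hc => by
    refine ⟨⋃₀ c, ⟨sUnion_subset fun s hs => (hcS hs).1, ?_⟩, fun s => subset_sUnion_of_mem⟩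
    rintro x ⟨s, hs, hxs⟩ y ⟨t, ht, hyt⟩ hxy
    rcases hc.total hs ht with hst | hts
    · exact (hcS ht).2 x (hst hxs) y hyt hxy
    · exact (hcS hs).2 x hxs y (hts hyt) hxy
  exact ⟨A, hA.1.1, hA.1.2, fun B hBW hB hAB => hAB.antisymm (hA.2 ⟨hBW, hB⟩ hAB)⟩

variable (d ε W) in
theorem maximalPackingInf_le_packingNumberSup :
    maximalPackingInf d ε W ≤ packingNumberSup d ε W := by
  obtain ⟨A, hAW, hA, hAmax⟩ := exists_maximal_isDistinguishable d ε W
  have hbdd : BddAbove {κ | ∃ A ⊆ W, IsDistinguishable d ε A ∧ #A = κ} :=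
    ⟨#W, by rintro _ ⟨A, hAW, -, rfl⟩; exact mk_le_mk_of_subset hAW⟩
  exact (csInf_le' ⟨A, hAW, hA, hAmax, rfl⟩ :
    maximalPackingInf d ε W ≤ #A).trans (le_csSup hbdd ⟨A, hAW, hA, rfl⟩)

variable (d ε W) in
theorem exists_maximal_isDistinguishable_card_eq_maximalPackingInf :
    ∃ A ⊆ W, IsDistinguishable d ε A ∧
      (∀ B ⊆ W, IsDistinguishable d ε B → A ⊆ B → A = B) ∧ #A = maximalPackingInf d ε W :=
  let ⟨A, hAW, hA, hAmax⟩ := exists_maximal_isDistinguishable d ε W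
  csInf_mem (s := {κ | ∃ A ⊆ W, IsDistinguishable d ε A ∧
    (∀ B ⊆ W, IsDistinguishable d ε B → A ⊆ B → A = B) ∧ #A = κ}) ⟨#A, A, hAW, hA, hAmax, rfl⟩

end Distance

section PseudoMetric

variable {X : Type u} [PseudoMetricSpace X] {ε : ℝ} {A W C : Set X}

theorem isNet_self (hε : 0 ≤ ε) : IsNet dist ε W W :=
  fun w hw => ⟨w, hw, by rwa [dist_self]⟩

theorem IsDistinguishable.isNet_of_maximal (hε : 0 ≤ ε) (hAW : A ⊆ W)
    (hA : IsDistinguishable dist ε A)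
    (hAmax : ∀ B ⊆ W, IsDistinguishable dist ε B → A ⊆ B → A = B) :
    IsNet dist ε W A := by
  intro w hw
  by_contra! hfar
  have hwA : IsDistinguishable dist ε (insert w A) := by
    rintro x (rfl | hx) y (rfl | hy) hxy
    · exact absurd rfl hxy
    · exact hfar y hy
    · rw [dist_comm]; exact hfar x hx
    · exact hA x hx y hy hxy
  have hw : w ∈ A := (hAmax _ (insert_subset hw hAW) hwA (subset_insert w A)).symm ▸ mem_insert w A
  exact (hfar w hw).not_ge (by rwa [dist_self])

variable (ε W) in
theorem coveringNumberIn_le_maximalPackingInf (hε : 0 ≤ ε) :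
    coveringNumberIn dist ε W W ≤ maximalPackingInf dist ε W := by
  obtain ⟨A, hAW, hA, hAmax, hAcard⟩ :=
    exists_maximal_isDistinguishable_card_eq_maximalPackingInf dist ε W
  exact hAcard ▸ coveringNumberIn_le_card hAW (hA.isNet_of_maximal hε hAW hAmax)

theorem IsNet.exists_subset_isNet_two_mul (hC : IsNet dist ε W C) :
    ∃ D ⊆ W, IsNet dist (2 * ε) W D ∧ #D ≤ #C := by
  choose! f hfW hf using fun c (hc : ∃ w ∈ W, dist w c ≤ ε) => hc
  refine ⟨f '' {c ∈ C | ∃ w ∈ W, dist w c ≤ ε}, image_subset_iff.2 fun c hc => hfW c hc.2,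
    fun w hw => ?_, mk_image_le.trans (mk_le_mk_of_subset (sep_subset _ _))⟩
  obtain ⟨c, hc, hwc⟩ := hC w hw
  refine ⟨f c, mem_image_of_mem f ⟨hc, w, hw, hwc⟩, ?_⟩
  calc dist w (f c) ≤ dist w c + dist (f c) c := dist_triangle_right _ _ _
    _ ≤ 2 * ε := by linarith [hf c ⟨w, hw, hwc⟩]

end PseudoMetric

section Metric

variable {X : Type u} [MetricSpace X] {ε : ℝ} {A D W : Set X}

theorem metricDensity_le_card (hDW : D ⊆ W)
    (hD : ∀ w ∈ W, ∀ δ : ℝ, 0 < δ → ∃ y ∈ D, dist w y < δ) : metricDensity W ≤ #D :=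
  csInf_le' ⟨D, hDW, hD, rfl⟩

variable (W) in
theorem exists_dense_subset_card_eq_metricDensity :
    ∃ D ⊆ W, (∀ w ∈ W, ∀ δ : ℝ, 0 < δ → ∃ y ∈ D, dist w y < δ) ∧ #D = metricDensity W :=
  csInf_mem (s := {κ | ∃ D ⊆ W, (∀ w ∈ W, ∀ δ : ℝ, 0 < δ → ∃ y ∈ D, dist w y < δ) ∧ #D = κ})
    ⟨#W, W, subset_rfl, fun w hw δ hδ => ⟨w, hw, by rwa [dist_self]⟩, rfl⟩

/-- Sending each point of `A` to a point of a dense set within `ε / 2` of it is injective. -/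
theorem IsDistinguishable.card_le_metricDensity (hε : 0 < ε) (hAW : A ⊆ W)
    (hA : IsDistinguishable dist ε A) : #A ≤ metricDensity W := by
  obtain ⟨D, -, hD, hDcard⟩ := exists_dense_subset_card_eq_metricDensity W
  choose f hfD hf using fun a : A => hD a (hAW a.2) (ε / 2) (half_pos hε)
  refine hDcard ▸ mk_le_of_injective (f := fun a => (⟨f a, hfD a⟩ : D)) fun a b hab => ?_
  by_contra hne
  have hfab : f a = f b := congrArg Subtype.val hab
  have := hA a a.2 b b.2 (Subtype.coe_injective.ne hne)
  have := dist_triangle_right (a : X) b (f a)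
  linarith [hf a, hfab ▸ hf b]

variable (W) in
theorem packingNumberSup_le_metricDensity (hε : 0 < ε) :
    packingNumberSup dist ε W ≤ metricDensity W :=
  csSup_le' <| by rintro _ ⟨A, hAW, hA, rfl⟩; exact hA.card_le_metricDensity hε hAW

theorem metricDensity_le_card_iUnion {D : ℕ → Set X} {δ : ℕ → ℝ}
    (hδ : Filter.Tendsto δ Filter.atTop (nhds 0)) (hDW : ∀ n, D n ⊆ W)
    (hD : ∀ n, IsNet dist (δ n) W (D n)) : metricDensity W ≤ #(⋃ n, D n) := by
  refine metricDensity_le_card (iUnion_subset hDW) fun w hw r hr => ?_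
  obtain ⟨n, hn⟩ := (hδ.eventually (gt_mem_nhds hr)).exists
  obtain ⟨y, hy, hwy⟩ := hD n w hw
  exact ⟨y, mem_iUnion_of_mem n hy, hwy.trans_lt hn⟩

theorem exists_pos_metricDensity_le_coveringNumberIn (h : ℵ₀ < (metricDensity W).ord.cof) :
    ∃ ε₀ : ℝ, 0 < ε₀ ∧ metricDensity W ≤ coveringNumberIn dist ε₀ univ W := by
  by_contra! hsmall
  have hnet : ∀ n : ℕ, ∃ D ⊆ W, IsNet dist (2 * (1 / (n + 1 : ℝ))) W D ∧ #D < metricDensity W := by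
    intro n
    obtain ⟨C, -, hC, hCcard⟩ := exists_isNet_card_eq_coveringNumberIn
      ⟨W, subset_univ W, isNet_self (ε := 1 / (n + 1 : ℝ)) (by positivity)⟩
    obtain ⟨D, hDW, hD, hDC⟩ := hC.exists_subset_isNet_two_mul
    exact ⟨D, hDW, hD, hDC.trans_lt (hCcard ▸ hsmall _ (by positivity))⟩
  choose D hDW hD hDcard using hnet
  have hδ : Filter.Tendsto (fun n : ℕ => 2 * (1 / (n + 1 : ℝ))) Filter.atTop (nhds 0) := by
    simpa using tendsto_one_div_add_atTop_nhds_zero_nat.const_mul (2 : ℝ)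
  exact (metricDensity_le_card_iUnion hδ hDW hD).not_gt
    (mk_iUnion_nat_lt_of_aleph0_lt_cof h hDcard)

end Metric

/-- Theorem 1.12: if `den(W)` has uncountable cofinality, then there is `ε₀ > 0` such that
`N̂ˣ_ε(W) = N̂_ε(W) = M̂_ε(W) = M*_ε(W) = den(W)` for all `ε ∈ (0, ε₀)`. -/
theorem covering_packing_eq_density {X : Type u} [MetricSpace X] (W : Set X)
    (h : Cardinal.aleph0 < (metricDensity W).ord.cof) :
    ∃ ε₀ : ℝ, 0 < ε₀ ∧ ∀ ε : ℝ, 0 < ε → ε < ε₀ →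
      coveringNumberIn dist ε Set.univ W = coveringNumberIn dist ε W W ∧
      coveringNumberIn dist ε W W = maximalPackingInf dist ε W ∧
      maximalPackingInf dist ε W = packingNumberSup dist ε W ∧
      packingNumberSup dist ε W = metricDensity W := by
  obtain ⟨ε₀, hε₀, hden⟩ := exists_pos_metricDensity_le_coveringNumberIn h
  refine ⟨ε₀, hε₀, fun ε hε hεε₀ => ?_⟩
  have hWnet : ∃ C ⊆ W, IsNet dist ε W C := ⟨W, subset_rfl, isNet_self hε.le⟩
  have h₀ : metricDensity W ≤ coveringNumberIn dist ε univ W :=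
    hden.trans (coveringNumberIn_mono subset_rfl hεε₀.le ⟨W, subset_univ W, isNet_self hε.le⟩)
  have h₁ : coveringNumberIn dist ε univ W ≤ coveringNumberIn dist ε W W :=
    coveringNumberIn_mono (subset_univ W) le_rfl hWnet
  have h₂ := coveringNumberIn_le_maximalPackingInf ε W hε.le
  have h₃ := maximalPackingInf_le_packingNumberSup dist ε W
  have h₄ := packingNumberSup_le_metricDensity W hε
  exact ⟨h₁.antisymm (h₂.trans (h₃.trans (h₄.trans h₀))),
    h₂.antisymm (h₃.trans (h₄.trans (h₀.trans h₁))),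
    h₃.antisymm (h₄.trans (h₀.trans (h₁.trans h₂))),
    h₄.antisymm (h₀.trans (h₁.trans (h₂.trans h₃)))⟩
end

section
/- Let (X,d_X) and (Y,d_Y) be nonempty metric spaces and let d be a partial distance-preserving metric on X × Y such that max{d_X(x₁,x₂), d_Y(y₁,y₂)} ≤ d((x₁,y₁),(x₂,y₂)) for all (x₁,y₁), (x₂,y₂) ∈ X × Y. Then (X × Y, d) is an ultrametric space if and only if for all compact sets W ⊆ X, Z ⊆ Y and every ε > 0 the equalities N_ε(W × Z) = M_ε(W × Z) and M_ε(W × Z) = M_ε(W) · M_ε(Z) hold, where the quantities on W × Z are computed with respect to the metric d. -/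
open Cardinal Set

universe u

/-- `d` is a metric (distance function satisfying the metric axioms). -/
def IsMetricOn {α : Type*} (d : α → α → ℝ) : Prop :=
  (∀ x, d x x = 0) ∧ (∀ x y, d x y = 0 → x = y) ∧ (∀ x y, d x y = d y x) ∧
    (∀ x y z, d x z ≤ d x y + d y z)

/-- `d` satisfies the ultra-triangle inequality. -/
def IsUltrametricOn {α : Type*} (d : α → α → ℝ) : Prop :=
  ∀ x y z, d x z ≤ max (d x y) (d y z)

/-- `d` is a partial distance-preserving distance function on `X × Y`. -/
def PartialDistPreserving {X Y : Type*} [MetricSpace X] [MetricSpace Y]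
    (d : X × Y → X × Y → ℝ) : Prop :=
  (∀ (x₁ x₂ : X) (y : Y), d (x₁, y) (x₂, y) = dist x₁ x₂) ∧
    (∀ (x : X) (y₁ y₂ : Y), d (x, y₁) (x, y₂) = dist y₁ y₂)

/-- `d` is a distance-increasing distance function on `X × Y`. -/
def DistanceIncreasing {X Y : Type*} [MetricSpace X] [MetricSpace Y]
    (d : X × Y → X × Y → ℝ) : Prop :=
  ∀ (x₁ x₂ x₃ x₄ : X) (y₁ y₂ y₃ y₄ : Y),
    dist x₁ x₂ ≤ dist x₃ x₄ → dist y₁ y₂ ≤ dist y₃ y₄ →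
      d (x₁, y₁) (x₂, y₂) ≤ d (x₃, y₃) (x₄, y₄)

/-!
If `d` is ultrametric, routing `d(p, q)` through `(q.1, p.2)` shows `d ≤ d_∞`, so `d` is the sup
metric and the factors are ultrametric. In an ultrametric space two points within `ε` of a common
point are within `ε` of each other, so each point of an `ε`-net covers at most one point of an
`ε`-separated set; hence any maximal `ε`-separated subset `T` of `K` realises both `N_ε(K)` and
`M_ε(K)`, and the product of two such sets is again one, giving multiplicativity.

Conversely, if `d(p, q) > m := d_∞(p, q)`, the set `{p.1, q.1} × {p.2, q.2}` contains the
`m`-separated pair `{p, q}` while each factor has `M_m ≤ 1`, contradicting multiplicativity; so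
`d = d_∞`. If then `d(p, r) > m := max (d(p, q), d(q, r))`, the grid spanned by `p, q, r` lies in
the closed `m`-ball about `q`, so `N_m ≤ 1 < 2 ≤ M_m` on it.
-/

open Metric Bornology

section DistanceFunction

variable {α : Type u} {d : α → α → ℝ} {ε : ℝ}

theorem isDistinguishable_iff_pairwise {A : Set α} :
    IsDistinguishable d ε A ↔ A.Pairwise fun x y => ε < d x y :=
  Iff.rfl

theorem le_packingNumberSup {A S : Set α} (hAS : A ⊆ S) (hA : IsDistinguishable d ε A) :
    #A ≤ packingNumberSup d ε S :=
  le_csSup ⟨#α, by rintro _ ⟨B, -, -, rfl⟩; exact mk_set_le B⟩ ⟨A, hAS, hA, rfl⟩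

theorem one_lt_packingNumberSup {S : Set α} {p q : α} (hp : p ∈ S) (hq : q ∈ S) (hpq : p ≠ q)
    (hεpq : ε < d p q) (hεqp : ε < d q p) : 1 < packingNumberSup d ε S := by
  have hpair : IsDistinguishable d ε {p, q} :=
    isDistinguishable_iff_pairwise.2 <| pairwise_pair.2 fun _ => ⟨hεpq, hεqp⟩
  refine lt_of_lt_of_le ?_ (le_packingNumberSup (pair_subset hp hq) hpair)
  exact one_lt_iff_nontrivial.2 (nontrivial_coe_sort.2 (nontrivial_pair hpq))

theorem coveringNumberIn_le_one {A W : Set α} {c : α} (hc : c ∈ A) (hW : ∀ w ∈ W, d w c ≤ ε) :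
    coveringNumberIn d ε A W ≤ 1 :=
  csInf_le' ⟨{c}, singleton_subset_iff.2 hc, fun w hw => ⟨c, rfl, hW w hw⟩, mk_singleton c⟩

end DistanceFunction

section PseudoMetric

variable {α : Type u} [PseudoMetricSpace α] {ε : ℝ}

theorem packingNumberSup_le_one_of_diam_le {S : Set α} (hS : IsBounded S) (h : diam S ≤ ε) :
    packingNumberSup dist ε S ≤ 1 := by
  refine csSup_le' ?_
  rintro _ ⟨A, hAS, hA, rfl⟩
  refine mk_le_one_iff_set_subsingleton.2 fun x hx y hy => by_contra fun hxy => ?_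
  have := (dist_le_diam_of_mem hS (hAS hx) (hAS hy)).trans h
  exact (hA x hx y hy hxy).not_ge this

theorem exists_isDistinguishable_isNet (hε : 0 ≤ ε) (K : Set α) :
    ∃ T ⊆ K, IsDistinguishable dist ε T ∧ IsNet dist ε K T := by
  obtain ⟨T, ⟨hTK, hT⟩, hmax⟩ :=
    zorn_subset {A : Set α | A ⊆ K ∧ IsDistinguishable dist ε A} fun c hc hchain =>
      ⟨⋃₀ c, ⟨sUnion_subset fun A hA => (hc hA).1, hchain.pairwise_sUnion.2 fun A hA => (hc hA).2⟩,
        fun _ => subset_sUnion_of_mem⟩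
  refine ⟨T, hTK, hT, fun w hw => by_contra fun hfar => ?_⟩
  simp only [not_exists, not_and, not_le] at hfar
  have hwT : w ∉ T := fun hwT => (hfar w hwT).not_ge (by simpa using hε)
  have hins : IsDistinguishable dist ε (insert w T) :=
    pairwise_insert.2 ⟨hT, fun c hc _ => ⟨hfar c hc, by rw [dist_comm]; exact hfar c hc⟩⟩
  exact hwT (hmax ⟨insert_subset hw hTK, hins⟩ (subset_insert w T) (mem_insert w T))

end PseudoMetric

section Ultrametric

variable {α : Type u} [PseudoMetricSpace α] [IsUltrametricDist α] {ε : ℝ}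

theorem IsDistinguishable.mk_le_of_isNet {T K C : Set α} (hT : IsDistinguishable dist ε T)
    (hTK : T ⊆ K) (hC : IsNet dist ε K C) : #T ≤ #C := by
  choose f hfC hf using fun t : T => hC t (hTK t.2)
  refine mk_le_of_injective (f := fun t => (⟨f t, hfC t⟩ : C)) fun t t' htt' => ?_
  have hft : f t = f t' := congrArg Subtype.val htt'
  refine Subtype.ext <| by_contra fun hne => (hT t t.2 t' t'.2 hne).not_ge ?_
  calc dist (t : α) t' ≤ max (dist (t : α) (f t)) (dist (f t) t') := dist_triangle_max _ _ _
    _ ≤ ε := max_le (hf t) (by rw [hft, dist_comm]; exact hf t')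

theorem coveringNumberIn_self_eq_mk {T K : Set α} (hTK : T ⊆ K)
    (hT : IsDistinguishable dist ε T) (hTn : IsNet dist ε K T) :
    coveringNumberIn dist ε K K = #T :=
  IsLeast.csInf_eq ⟨⟨T, hTK, hTn, rfl⟩, by
    rintro _ ⟨C, -, hC, rfl⟩; exact hT.mk_le_of_isNet hTK hC⟩

theorem packingNumberSup_eq_mk {T K : Set α} (hTK : T ⊆ K)
    (hT : IsDistinguishable dist ε T) (hTn : IsNet dist ε K T) :
    packingNumberSup dist ε K = #T :=
  IsGreatest.csSup_eq ⟨⟨T, hTK, hT, rfl⟩, by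
    rintro _ ⟨A, hAK, hA, rfl⟩; exact hA.mk_le_of_isNet hAK hTn⟩

theorem coveringNumberIn_self_eq_packingNumberSup (hε : 0 ≤ ε) (K : Set α) :
    coveringNumberIn dist ε K K = packingNumberSup dist ε K := by
  obtain ⟨T, hTK, hT, hTn⟩ := exists_isDistinguishable_isNet hε K
  rw [coveringNumberIn_self_eq_mk hTK hT hTn, packingNumberSup_eq_mk hTK hT hTn]

end Ultrametric

section Prod

variable {X Y : Type u} [PseudoMetricSpace X] [PseudoMetricSpace Y] {ε : ℝ}

instance Prod.instIsUltrametricDist [IsUltrametricDist X] [IsUltrametricDist Y] :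
    IsUltrametricDist (X × Y) :=
  ⟨fun p q r => by
    rw [Prod.dist_eq, Prod.dist_eq, Prod.dist_eq]
    exact max_le
      ((dist_triangle_max p.1 q.1 r.1).trans (max_le_max (le_max_left _ _) (le_max_left _ _)))
      ((dist_triangle_max p.2 q.2 r.2).trans (max_le_max (le_max_right _ _) (le_max_right _ _)))⟩

theorem IsUltrametricDist.of_prod_left [Nonempty Y] [IsUltrametricDist (X × Y)] :
    IsUltrametricDist X :=
  ⟨fun a b c => by
    obtain ⟨y⟩ := ‹Nonempty Y›
    simpa only [dist_prod_same_right] using dist_triangle_max (a, y) (b, y) (c, y)⟩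

theorem IsUltrametricDist.of_prod_right [Nonempty X] [IsUltrametricDist (X × Y)] :
    IsUltrametricDist Y :=
  ⟨fun a b c => by
    obtain ⟨x⟩ := ‹Nonempty X›
    simpa only [dist_prod_same_left] using dist_triangle_max (x, a) (x, b) (x, c)⟩

theorem dist_fst_le_dist (p q : X × Y) : dist p.1 q.1 ≤ dist p q :=
  (le_max_left _ _).trans_eq Prod.dist_eq.symm

theorem dist_snd_le_dist (p q : X × Y) : dist p.2 q.2 ≤ dist p q :=
  (le_max_right _ _).trans_eq Prod.dist_eq.symm

theorem IsDistinguishable.prod {S : Set X} {T : Set Y} (hS : IsDistinguishable dist ε S)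
    (hT : IsDistinguishable dist ε T) : IsDistinguishable dist ε (S ×ˢ T) := by
  rintro ⟨a, b⟩ ⟨ha, hb⟩ ⟨a', b'⟩ ⟨ha', hb'⟩ hne
  rw [Prod.dist_eq]
  rcases eq_or_ne a a' with rfl | haa'
  · exact lt_max_of_lt_right (hT b hb b' hb' fun hbb' => hne (by rw [hbb']))
  · exact lt_max_of_lt_left (hS a ha a' ha' haa')

theorem IsNet.prod {W C : Set X} {Z D : Set Y} (hC : IsNet dist ε W C) (hD : IsNet dist ε Z D) :
    IsNet dist ε (W ×ˢ Z) (C ×ˢ D) := by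
  rintro ⟨w, z⟩ ⟨hw, hz⟩
  obtain ⟨c, hc, hwc⟩ := hC w hw
  obtain ⟨e, he, hze⟩ := hD z hz
  exact ⟨(c, e), ⟨hc, he⟩, by rw [Prod.dist_eq]; exact max_le hwc hze⟩

theorem packingNumberSup_prod [IsUltrametricDist X] [IsUltrametricDist Y] (hε : 0 ≤ ε)
    (W : Set X) (Z : Set Y) :
    packingNumberSup dist ε (W ×ˢ Z) = packingNumberSup dist ε W * packingNumberSup dist ε Z := by
  obtain ⟨S, hSW, hS, hSn⟩ := exists_isDistinguishable_isNet hε W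
  obtain ⟨T, hTZ, hT, hTn⟩ := exists_isDistinguishable_isNet hε Z
  rw [packingNumberSup_eq_mk (prod_mono hSW hTZ) (hS.prod hT) (hSn.prod hTn),
    packingNumberSup_eq_mk hSW hS hSn, packingNumberSup_eq_mk hTZ hT hTn,
    mk_congr (Equiv.Set.prod S T), mk_prod, lift_id, lift_id]

end Prod

theorem le_dist_of_isUltrametricOn {X Y : Type u} [MetricSpace X] [MetricSpace Y]
    {d : X × Y → X × Y → ℝ} (hpdp : PartialDistPreserving d) (hU : IsUltrametricOn d)
    (p q : X × Y) : d p q ≤ dist p q :=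
  calc d p q ≤ max (d p (q.1, p.2)) (d (q.1, p.2) q) := hU p (q.1, p.2) q
    _ = dist p q := by rw [hpdp.1, hpdp.2, Prod.dist_eq]

theorem le_dist_of_packingNumberSup_prod_le {X Y : Type u} [MetricSpace X] [MetricSpace Y]
    (d : X × Y → X × Y → ℝ) (hself : ∀ p, d p p = 0) (hsymm : ∀ p q, d p q = d q p)
    (hmul : ∀ (W : Set X) (Z : Set Y), W.Finite → Z.Finite → ∀ ε : ℝ, 0 < ε →
      packingNumberSup d ε (W ×ˢ Z) ≤ packingNumberSup dist ε W * packingNumberSup dist ε Z)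
    (p q : X × Y) : d p q ≤ dist p q := by
  rcases eq_or_ne p q with rfl | hpq
  · rw [hself, dist_self]
  refine le_of_not_gt fun hlt => ?_
  have hfst := packingNumberSup_le_one_of_diam_le (toFinite {p.1, q.1}).isBounded
    ((diam_pair (x := p.1)).trans_le (dist_fst_le_dist p q))
  have hsnd := packingNumberSup_le_one_of_diam_le (toFinite {p.2, q.2}).isBounded
    ((diam_pair (x := p.2)).trans_le (dist_snd_le_dist p q))
  have hpair := one_lt_packingNumberSup (S := {p.1, q.1} ×ˢ {p.2, q.2})
    ⟨mem_insert _ _, mem_insert _ _⟩ ⟨mem_insert_of_mem _ rfl, mem_insert_of_mem _ rfl⟩ hpq hlt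
    (hsymm p q ▸ hlt)
  have hprod := hmul _ _ (toFinite {p.1, q.1}) (toFinite {p.2, q.2}) _ (dist_pos.2 hpq)
  exact (hpair.trans_le (hprod.trans (mul_le_one' hfst hsnd))).false

theorem isUltrametricDist_prod_of_packingNumberSup_le {X Y : Type u} [PseudoMetricSpace X]
    [PseudoMetricSpace Y]
    (h : ∀ (W : Set X) (Z : Set Y), W.Finite → Z.Finite → ∀ ε : ℝ, 0 < ε →
      packingNumberSup dist ε (W ×ˢ Z) ≤ coveringNumberIn dist ε (W ×ˢ Z) (W ×ˢ Z)) :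
    IsUltrametricDist (X × Y) := by
  refine ⟨fun p q r => le_of_not_gt fun hlt => ?_⟩
  set m := max (dist p q) (dist q r)
  have hm : 0 < m := by
    have := dist_triangle p q r
    linarith [le_max_left (dist p q) (dist q r), le_max_right (dist p q) (dist q r)]
  have hpr : p ≠ r := by
    rintro rfl
    exact (dist_self p ▸ hlt).not_ge hm.le
  set S := ({p.1, q.1, r.1} : Set X) ×ˢ ({p.2, q.2, r.2} : Set Y) with hS
  have hball : S ⊆ closedBall q m := by
    refine (prod_mono ?_ ?_).trans (closedBall_prod_same q.1 q.2 m).subset <;>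
      simp only [insert_subset_iff, singleton_subset_iff, mem_closedBall, dist_self, hm.le,
        true_and]
    · exact ⟨(dist_fst_le_dist p q).trans (le_max_left _ _),
        dist_comm r.1 q.1 ▸ (dist_fst_le_dist q r).trans (le_max_right _ _)⟩
    · exact ⟨(dist_snd_le_dist p q).trans (le_max_left _ _),
        dist_comm r.2 q.2 ▸ (dist_snd_le_dist q r).trans (le_max_right _ _)⟩
  have hcover : coveringNumberIn dist m S S ≤ 1 :=
    coveringNumberIn_le_one (by simp [hS]) fun w hw => hball hw
  have hpack : 1 < packingNumberSup dist m S :=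
    one_lt_packingNumberSup (by simp [hS]) (by simp [hS]) hpr hlt (dist_comm p r ▸ hlt)
  have hpack_le := h _ _ (toFinite {p.1, q.1, r.1}) (toFinite {p.2, q.2, r.2}) m hm
  exact (hpack.trans_le (hpack_le.trans hcover)).false

/-- Proposition 3.4: for a partial distance-preserving metric `d ≥ d_∞` on `X × Y`,
`(X × Y, d)` is ultrametric iff `N_ε(W × Z) = M_ε(W × Z)` and
`M_ε(W × Z) = M_ε(W) · M_ε(Z)` hold for all compact `W ⊆ X`, `Z ⊆ Y` and all `ε > 0`. -/
theorem ultrametric_iff_covering_packing_multiplicative {X Y : Type u} [MetricSpace X]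
    [MetricSpace Y] [Nonempty X] [Nonempty Y]
    (d : X × Y → X × Y → ℝ) (hmetric : IsMetricOn d) (hpdp : PartialDistPreserving d)
    (hlow : ∀ p q : X × Y, max (dist p.1 q.1) (dist p.2 q.2) ≤ d p q) :
    IsUltrametricOn d ↔
      ∀ (W : Set X) (Z : Set Y), IsCompact W → IsCompact Z → ∀ ε : ℝ, 0 < ε →
        coveringNumberIn d ε (W ×ˢ Z) (W ×ˢ Z) = packingNumberSup d ε (W ×ˢ Z) ∧
        packingNumberSup d ε (W ×ˢ Z) =
          packingNumberSup dist ε W * packingNumberSup dist ε Z := by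
  constructor
  · intro hU
    obtain rfl : d = dist :=
      funext₂ fun p q => (le_dist_of_isUltrametricOn hpdp hU p q).antisymm (hlow p q)
    have : IsUltrametricDist (X × Y) := ⟨hU⟩
    have := IsUltrametricDist.of_prod_left (X := X) (Y := Y)
    have := IsUltrametricDist.of_prod_right (X := X) (Y := Y)
    exact fun W Z _ _ ε hε =>
      ⟨coveringNumberIn_self_eq_packingNumberSup hε.le _, packingNumberSup_prod hε.le W Z⟩
  · intro h
    obtain rfl : d = dist := funext₂ fun p q =>
      (le_dist_of_packingNumberSup_prod_le d hmetric.1 hmetric.2.2.1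
        (fun W Z hW hZ ε hε => (h W Z hW.isCompact hZ.isCompact ε hε).2.le) p q).antisymm (hlow p q)
    exact (isUltrametricDist_prod_of_packingNumberSup_le fun W Z hW hZ ε hε =>
      (h W Z hW.isCompact hZ.isCompact ε hε).1.ge).dist_triangle_max
end
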